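/- arXiv:2106.08314 — 2 statements merged into one kernel-verified Lean document; each statement's English description precedes it below -/
import Mathlib

section
/- Let τ > 0 and let F : ℝ → ℝ satisfy 0 ≤ F(x) ≤ M for all x, with A ≥ 0. If x : [0,T] → ℝ solves x' = -(1/τ + F(x))x + A·F(x) with 0 ≤ x(0) ≤ A, then 0 ≤ x(t) ≤ A for all t ∈ [0,T]. -/
/-!
A trajectory cannot leave `[0, A]` because the LTC vector field points inward outside it:
for `x < 0` it is `-(1/τ + F x) x + A F x ≥ 0`, and for `x > A` it is
`-x/τ - F x (x - A) ≤ 0`. The one-sided comparison principle is reduced to the strict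
barrier lemma of Mathlib by comparing with `c + ε (1 + (t - a))` and letting `ε → 0`.
-/

open Set

section Invariance

variable {x d : ℝ → ℝ} {a b : ℝ}

theorem image_le_const_of_deriv_right_nonpos_above {c : ℝ} (hc : ContinuousOn x (Icc a b))
    (hx : ∀ t ∈ Ico a b, HasDerivWithinAt x (d t) (Ici t) t)
    (hd : ∀ t ∈ Ico a b, c < x t → d t ≤ 0) (ha : x a ≤ c) :
    ∀ t ∈ Icc a b, x t ≤ c := by
  intro t ht
  refine le_of_forall_pos_le_add fun ε hε => ?_
  have h_len : 0 < 1 + (t - a) := by linarith [ht.1]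
  set δ := ε / (1 + (t - a))
  have hδ : 0 < δ := div_pos hε h_len
  have hB (s : ℝ) : HasDerivAt (fun s => c + δ * (1 + (s - a))) δ s := by
    simpa using (((hasDerivAt_id s).sub_const a).const_add 1).const_mul δ |>.const_add c
  have barrier := image_le_of_deriv_right_lt_deriv_boundary hc hx (by simp; linarith) hB
    (fun s hs hxs => (hd s hs (by nlinarith [hs.1])).trans_lt hδ) ht
  calc x t ≤ c + δ * (1 + (t - a)) := barrier
    _ = c + ε := by rw [div_mul_cancel₀ _ h_len.ne']

theorem image_mem_Icc_of_deriv_right_inward {lo hi : ℝ} (hc : ContinuousOn x (Icc a b))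
    (hx : ∀ t ∈ Ico a b, HasDerivWithinAt x (d t) (Ici t) t)
    (hlo : ∀ t ∈ Ico a b, x t < lo → 0 ≤ d t) (hhi : ∀ t ∈ Ico a b, hi < x t → d t ≤ 0)
    (ha : x a ∈ Icc lo hi) : ∀ t ∈ Icc a b, x t ∈ Icc lo hi := fun t ht =>
  ⟨neg_le_neg_iff.mp <| image_le_const_of_deriv_right_nonpos_above hc.neg
      (fun s hs => (hx s hs).neg)
      (fun s hs hxs => neg_nonpos.mpr (hlo s hs (neg_lt_neg_iff.mp hxs)))
      (neg_le_neg ha.1) t ht,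
    image_le_const_of_deriv_right_nonpos_above hc hx hhi ha.2 t ht⟩

end Invariance

theorem stmt_2_general (τ A M T : ℝ) (hτ : 0 < τ) (hA : 0 ≤ A)
    (F : ℝ → ℝ) (hF : ∀ x, 0 ≤ F x ∧ F x ≤ M)
    (x : ℝ → ℝ)
    (hx : ∀ t ∈ Set.Icc (0 : ℝ) T,
      HasDerivAt x (-(1 / τ + F (x t)) * x t + A * F (x t)) t)
    (h0 : 0 ≤ x 0) (h0' : x 0 ≤ A) :
    ∀ t ∈ Set.Icc (0 : ℝ) T, 0 ≤ x t ∧ x t ≤ A := by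
  have hτ_inv : 0 ≤ 1 / τ := by positivity
  refine image_mem_Icc_of_deriv_right_inward
    (fun t ht => (hx t ht).continuousAt.continuousWithinAt)
    (fun t ht => (hx t (Ico_subset_Icc_self ht)).hasDerivWithinAt) ?_ ?_ ⟨h0, h0'⟩
  · intro t _ hxt
    nlinarith [(hF (x t)).1]
  · intro t _ hxt
    nlinarith [(hF (x t)).1]

/-- Forward invariance of `[0, A]` for the scalar LTC equation with
`0 ≤ F ≤ M` and `A ≥ 0`. -/
theorem stmt_2 (τ A M T : ℝ) (hτ : 0 < τ) (hA : 0 ≤ A) (hT : 0 ≤ T)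
    (F : ℝ → ℝ) (hF : ∀ x, 0 ≤ F x ∧ F x ≤ M)
    (x : ℝ → ℝ)
    (hx : ∀ t ∈ Set.Icc (0 : ℝ) T,
      HasDerivAt x (-(1 / τ + F (x t)) * x t + A * F (x t)) t)
    (h0 : 0 ≤ x 0) (h0' : x 0 ≤ A) :
    ∀ t ∈ Set.Icc (0 : ℝ) T, 0 ≤ x t ∧ x t ≤ A :=
  stmt_2_general τ A M T hτ hA F hF x hx h0 h0'
end

section
/- Let τ > 0 and suppose F : ℝ → ℝ is bounded with |F(x)| ≤ M. Any solution x : [0,T] → ℝ of x' = -(1/τ + F(x))x + A·F(x) satisfies |x(t)| ≤ max(|x(0)|, τ·|A|·M/(1 - τ·M)) for all t, provided τ·M < 1. -/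
/-!
Put `C = τ|A|M / (1 - τM)`. Since `|F| ≤ M < 1/τ`, the LTC vector field `v` satisfies
`y · v(y) ≤ |y| (|A| M - (1/τ - M) |y|)`, which is `≤ 0` as soon as `|y| ≥ C`. Hence `x²` cannot
increase while `|x| ≥ max (|x 0|) C`, and a fencing argument on `x²` keeps `|x|` below that level.
-/

open Set

theorem image_le_of_deriv_right_nonpos_of_le {f f' : ℝ → ℝ} {a b B : ℝ}
    (hf : ContinuousOn f (Icc a b)) (hf' : ∀ x ∈ Ico a b, HasDerivWithinAt f (f' x) (Ici x) x)
    (ha : f a ≤ B) (bound : ∀ x ∈ Ico a b, B ≤ f x → f' x ≤ 0) :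
    ∀ ⦃x⦄, x ∈ Icc a b → f x ≤ B := by
  -- Against the tilted barrier `B + ε (x - a)` the weak sign condition becomes the strict one
  -- of `image_le_of_deriv_right_lt_deriv_boundary'`; then let `ε → 0`.
  have fence : ∀ x ∈ Icc a b, ∀ ε > 0, f x ≤ B + ε * (x - a) := fun x hx ε hε => by
    refine image_le_of_deriv_right_lt_deriv_boundary' hf hf'
      (B := fun y => B + ε * (y - a)) (B' := fun _ => ε) (by simpa using ha) (by fun_prop)
      (fun y _ => ?_) (fun y hy hfy => ?_) hx
    · simpa using (((hasDerivWithinAt_id y (Ici y)).sub_const a).const_mul ε).const_add B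
    · have hBy : B ≤ f y := hfy ▸ le_add_of_nonneg_right (mul_nonneg hε.le (sub_nonneg.2 hy.1))
      exact (bound y hy hBy).trans_lt hε
  intro x hx
  have : ContinuousWithinAt (fun ε => B + ε * (x - a)) (Ioi 0) 0 := by fun_prop
  simpa using continuousWithinAt_const.closure_le (by simp) this (fence x hx)

theorem abs_le_of_mul_deriv_right_nonpos {x x' : ℝ → ℝ} {a b R : ℝ}
    (hx : ContinuousOn x (Icc a b)) (hx' : ∀ s ∈ Ico a b, HasDerivWithinAt x (x' s) (Ici s) s)
    (ha : |x a| ≤ R) (bound : ∀ s ∈ Ico a b, R ≤ |x s| → x s * x' s ≤ 0) :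
    ∀ ⦃t⦄, t ∈ Icc a b → |x t| ≤ R := by
  have hR : |R| = R := abs_of_nonneg ((abs_nonneg _).trans ha)
  intro t ht
  rw [← hR, ← sq_le_sq]
  refine image_le_of_deriv_right_nonpos_of_le (f := fun s => x s ^ 2)
    (f' := fun s => 2 * (x s * x' s)) (hx.pow 2) (fun s hs => ?_) ?_ (fun s hs hRs => ?_) ht
  · simpa [mul_assoc] using (hx' s hs).fun_pow 2
  · simpa [sq_le_sq, hR] using ha
  · have := bound s hs (by simpa [sq_le_sq, hR] using hRs)
    linarith

/-- The right-hand side of the scalar LTC equation `x' = -(1/τ + F x) x + A F x`. -/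
noncomputable def ltcField (τ A : ℝ) (F : ℝ → ℝ) (y : ℝ) : ℝ := -(1 / τ + F y) * y + A * F y

theorem mul_ltcField_le {τ A M : ℝ} {F : ℝ → ℝ} (hF : ∀ x, |F x| ≤ M) (y : ℝ) :
    y * ltcField τ A F y ≤ |y| * (|A| * M - (1 / τ - M) * |y|) := by
  have hquad : -F y * (y * y) ≤ M * (|y| * |y|) := by
    rw [← abs_mul_abs_self y]
    exact mul_le_mul_of_nonneg_right (neg_le.mp (abs_le.mp (hF y)).1) (mul_self_nonneg _)
  have hlin : A * F y * y ≤ |A| * M * |y| :=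
    calc A * F y * y ≤ |A * F y * y| := le_abs_self _
      _ = |A| * |F y| * |y| := by rw [abs_mul, abs_mul]
      _ ≤ |A| * M * |y| := by gcongr; exact hF y
  have hsq : y * y = |y| * |y| := (abs_mul_abs_self y).symm
  unfold ltcField
  linear_combination hquad + hlin - 1 / τ * hsq

theorem mul_ltcField_nonpos {τ A M : ℝ} {F : ℝ → ℝ} (hτ : 0 < τ) (hτM : τ * M < 1)
    (hF : ∀ x, |F x| ≤ M) {y : ℝ} (hy : τ * |A| * M / (1 - τ * M) ≤ |y|) :
    y * ltcField τ A F y ≤ 0 := by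
  have hgap : 0 < 1 / τ - M := by rw [sub_pos, lt_div_iff₀ hτ]; linarith
  have hC : τ * |A| * M / (1 - τ * M) = |A| * M / (1 / τ - M) := by field_simp
  rw [hC, div_le_iff₀ hgap] at hy
  refine (mul_ltcField_le hF y).trans (mul_nonpos_of_nonneg_of_nonpos (abs_nonneg y) ?_)
  linarith

theorem stmt_3_general (τ A M T : ℝ) (hτ : 0 < τ) (hτM : τ * M < 1)
    (F : ℝ → ℝ) (hF : ∀ x, |F x| ≤ M)
    (x : ℝ → ℝ)
    (hx : ∀ t ∈ Set.Icc (0 : ℝ) T,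
      HasDerivAt x (-(1 / τ + F (x t)) * x t + A * F (x t)) t) :
    ∀ t ∈ Set.Icc (0 : ℝ) T,
      |x t| ≤ max (|x 0|) (τ * |A| * M / (1 - τ * M)) := fun _ ht =>
  abs_le_of_mul_deriv_right_nonpos (x' := fun s => ltcField τ A F (x s))
    (fun s hs => (hx s hs).continuousAt.continuousWithinAt)
    (fun s hs => (hx s (Ico_subset_Icc_self hs)).hasDerivWithinAt) (le_max_left _ _)
    (fun _ _ hs => mul_ltcField_nonpos hτ hτM hF ((le_max_right _ _).trans hs)) ht

/-- Boundedness of LTC trajectories: if `|F| ≤ M` and `τ·M < 1`, then any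
solution satisfies `|x(t)| ≤ max (|x 0|) (τ·|A|·M/(1 - τ·M))`. -/
theorem stmt_3 (τ A M T : ℝ) (hτ : 0 < τ) (hM : 0 ≤ M) (hτM : τ * M < 1)
    (hT : 0 ≤ T) (F : ℝ → ℝ) (hF : ∀ x, |F x| ≤ M)
    (x : ℝ → ℝ)
    (hx : ∀ t ∈ Set.Icc (0 : ℝ) T,
      HasDerivAt x (-(1 / τ + F (x t)) * x t + A * F (x t)) t) :
    ∀ t ∈ Set.Icc (0 : ℝ) T,
      |x t| ≤ max (|x 0|) (τ * |A| * M / (1 - τ * M)) :=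
  stmt_3_general τ A M T hτ hτM F hF x hx
end
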